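/- arXiv:1903.09011 — 2 statements merged into one kernel-verified Lean document; each statement's English description precedes it below -/
import Mathlib

section
/- If (A,B) is a separation of H of order k and β is an immersion of H in G, then G contains k pairwise edge-disjoint paths from β(A) to β(B); in particular, G contains no separation (C,D) of order less than k with β(A) ⊆ C and β(B) ⊆ D. -/
/-- A finite multigraph without loops: vertices `V`, edges `E`,
each edge has an unordered pair of distinct endpoints. -/
structure Multigraph where
  V : Type
  E : Type
  [fV : Fintype V]
  [fE : Fintype E]
  [dV : DecidableEq V]
  [dE : DecidableEq E]
  ends : E → Sym2 V
  noLoop : ∀ e, ¬ (ends e).IsDiag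

attribute [instance] Multigraph.fV Multigraph.fE Multigraph.dV Multigraph.dE

namespace Multigraph

/-- Walks in a multigraph. -/
inductive Walk (G : Multigraph) : G.V → G.V → Type
  | nil (v : G.V) : Walk G v v
  | cons {u v w : G.V} (e : G.E) (h : G.ends e = s(u, v)) (p : Walk G v w) : Walk G u w

/-- The list of edges traversed by a walk. -/
def Walk.edges {G : Multigraph} : {u v : G.V} → G.Walk u v → List G.E
  | _, _, .nil _ => []
  | _, _, .cons e _ p => e :: p.edges

/-- The list of vertices visited by a walk. -/
def Walk.support {G : Multigraph} : {u v : G.V} → G.Walk u v → List G.V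
  | u, _, .nil _ => [u]
  | u, _, .cons _ _ p => u :: p.support

/-- A walk is a path if it visits no vertex twice. -/
def Walk.IsPath {G : Multigraph} {u v : G.V} (p : G.Walk u v) : Prop := p.support.Nodup

/-- Data of an immersion of `H` into `G`: an injective map on vertices and,
for each edge of `H`, a path in `G` joining the images of its endpoints,
the paths being pairwise edge-disjoint. -/
structure ImmersionData (H G : Multigraph) where
  vmap : H.V → G.V
  inj : Function.Injective vmap
  pstart : H.E → G.V
  pend : H.E → G.V
  walk : ∀ e, G.Walk (pstart e) (pend e)
  ends_eq : ∀ e, s(pstart e, pend e) = (H.ends e).map vmap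
  isPath : ∀ e, (walk e).IsPath
  edgeDisj : ∀ e e', e ≠ e' → List.Disjoint (walk e).edges (walk e').edges

/-- `H` immerses in `G`. -/
def Immerses (H G : Multigraph) : Prop := Nonempty (ImmersionData H G)

/-- Data witnessing that `G` contains a subdivision of `H` as a subgraph
(i.e. `H` is a topological minor of `G`): as an immersion, but moreover the
paths may only meet at images of common endpoints. -/
structure SubdivisionData (H G : Multigraph) extends ImmersionData H G where
  vtxDisj : ∀ e e', e ≠ e' → ∀ x, x ∈ (walk e).support → x ∈ (walk e').support →
    ∃ w, x = vmap w ∧ w ∈ H.ends e ∧ w ∈ H.ends e'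

/-- `G` contains a subdivision of `H` as a subgraph. -/
def ContainsSubdivision (H G : Multigraph) : Prop := Nonempty (SubdivisionData H G)

/-- The complete bipartite graph `K_{3,3}`. -/
def K33 : Multigraph where
  V := Fin 3 ⊕ Fin 3
  E := Fin 3 × Fin 3
  ends e := s(Sum.inl e.1, Sum.inr e.2)
  noLoop e := by simp [Sym2.mk_isDiag_iff]

/-- The complete graph `K_5`. -/
def K5 : Multigraph where
  V := Fin 5
  E := {p : Fin 5 × Fin 5 // p.1 < p.2}
  ends e := s(e.1.1, e.1.2)
  noLoop e := by simpa [Sym2.mk_isDiag_iff] using e.2.ne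

variable (G : Multigraph)

/-- The degree of a vertex: the number of incident edges. -/
def deg (v : G.V) : ℕ := (Finset.univ.filter fun e => v ∈ G.ends e).card

/-- The multiplicity of the (possible) edge between `u` and `v`. -/
def mult (u v : G.V) : ℕ := (Finset.univ.filter fun e => G.ends e = s(u, v)).card

/-- The edge cut determined by a set `A` of vertices. -/
def cut (A : Finset G.V) : Finset G.E :=
  Finset.univ.filter fun e => ∃ u ∈ A, ∃ v ∈ Aᶜ, G.ends e = s(u, v)

/-- Every edge cut of `G` has at least `k` edges. -/
def EdgeConnGe (k : ℕ) : Prop :=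
  ∀ A : Finset G.V, A.Nonempty → A ≠ Finset.univ → k ≤ (G.cut A).card

/-- Internally 4-edge-connected: 3-edge-connected and every 3-edge cut has a
side consisting of a single vertex. -/
def Internally4EC : Prop :=
  G.EdgeConnGe 3 ∧ ∀ A : Finset G.V, A.Nonempty → A ≠ Finset.univ →
    (G.cut A).card = 3 → A.card = 1 ∨ Aᶜ.card = 1

/-- Weakly 5-edge-connected: internally 4-edge-connected and every 4-edge cut
has a side with at most two vertices. -/
def Weakly5EC : Prop :=
  G.Internally4EC ∧ ∀ A : Finset G.V, A.Nonempty → A ≠ Finset.univ →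
    (G.cut A).card = 4 → A.card ≤ 2 ∨ Aᶜ.card ≤ 2

/-- `G` is `d`-regular. -/
def IsRegular (d : ℕ) : Prop := ∀ v, G.deg v = d

/-- `G` is connected. -/
def Connected : Prop := ∀ u v : G.V, Nonempty (G.Walk u v)

/-- `v` is a cut-vertex: the remaining vertices split into two nonempty parts
with no edge between them. -/
def IsCutVertex (v : G.V) : Prop :=
  ∃ C D : Finset G.V, C.Nonempty ∧ D.Nonempty ∧ Disjoint C D ∧ v ∉ C ∧ v ∉ D ∧
    (∀ x : G.V, x ∈ C ∪ D ∨ x = v) ∧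
    ∀ e : G.E, ¬ ∃ u ∈ C, ∃ w ∈ D, G.ends e = s(u, w)

/-- `G` is 2-connected. -/
def TwoConnected : Prop :=
  G.Connected ∧ 3 ≤ Fintype.card G.V ∧ ∀ v, ¬ G.IsCutVertex v

/-- Planarity, via Kuratowski's characterization: no subdivision of `K_5`
nor of `K_{3,3}` as a subgraph. -/
def Planar : Prop := ¬ ContainsSubdivision K5 G ∧ ¬ ContainsSubdivision K33 G

end Multigraph

/-
Each edge of `H` crossing the separation is carried by `β` to a path of `G` from `β(A)` to `β(Aᶜ)`
(after reversing it if necessary), and distinct edges give edge-disjoint paths. Any separation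
`(C, Cᶜ)` with `β(A) ⊆ C` and `β(Aᶜ) ⊆ Cᶜ` must be crossed by each of these paths in an edge of
its cut, and edge-disjointness makes these crossing edges distinct.
-/

namespace Multigraph

variable {G : Multigraph}

namespace Walk

def append : {u v w : G.V} → G.Walk u v → G.Walk v w → G.Walk u w
  | _, _, _, .nil _, q => q
  | _, _, _, .cons e h p, q => .cons e h (p.append q)

def reverse : {u v : G.V} → G.Walk u v → G.Walk v u
  | _, _, .nil v => .nil v
  | _, _, .cons e h p => p.reverse.append (.cons e (h.trans Sym2.eq_swap) (.nil _))

lemma edges_append : ∀ {u v w : G.V} (p : G.Walk u v) (q : G.Walk v w),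
    (p.append q).edges = p.edges ++ q.edges
  | _, _, _, .nil _, _ => rfl
  | _, _, _, .cons e h p, q => by simp [append, edges, edges_append p q]

lemma edges_reverse : ∀ {u v : G.V} (p : G.Walk u v), p.reverse.edges = p.edges.reverse
  | _, _, .nil _ => rfl
  | _, _, .cons e h p => by simp [reverse, edges_append, edges, edges_reverse p]

lemma support_eq_cons_tail : ∀ {u v : G.V} (p : G.Walk u v), p.support = u :: p.support.tail
  | _, _, .nil _ => rfl
  | _, _, .cons _ _ _ => rfl

lemma support_append : ∀ {u v w : G.V} (p : G.Walk u v) (q : G.Walk v w),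
    (p.append q).support = p.support.dropLast ++ q.support
  | _, _, _, .nil _, q => rfl
  | _, _, _, .cons e h p, q => by
      simp only [append, support, support_append p q]
      rw [p.support_eq_cons_tail]
      rfl

lemma support_reverse : ∀ {u v : G.V} (p : G.Walk u v), p.reverse.support = p.support.reverse
  | _, _, .nil _ => rfl
  | _, _, .cons e h p => by
      simp only [reverse, support_append, support_reverse p, support]
      rw [p.support_eq_cons_tail]
      simp

lemma IsPath.reverse {u v : G.V} {p : G.Walk u v} (hp : p.IsPath) : p.reverse.IsPath := by
  rw [IsPath, support_reverse]
  exact List.nodup_reverse.2 hp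

lemma exists_mem_edges_mem_cut {C : Finset G.V} :
    ∀ {u v : G.V} (p : G.Walk u v), u ∈ C → v ∉ C → ∃ e ∈ p.edges, e ∈ G.cut C
  | _, _, .nil _, hu, hv => absurd hu hv
  | u, _, .cons (v := v) e h p, hu, hw => by
      by_cases hv : v ∈ C
      · obtain ⟨e', he', hcut⟩ := exists_mem_edges_mem_cut p hv hw
        exact ⟨e', List.mem_cons_of_mem _ he', hcut⟩
      · refine ⟨e, List.mem_cons_self, ?_⟩
        simp only [cut, Finset.mem_filter, Finset.mem_univ, true_and]
        exact ⟨u, hu, v, Finset.mem_compl.2 hv, h⟩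

end Walk

lemma card_le_card_cut_of_pairwise_disjoint {ι : Type*} [Fintype ι] {C : Finset G.V}
    (P : ι → Σ u v : G.V, G.Walk u v) (hstart : ∀ i, (P i).1 ∈ C) (hend : ∀ i, (P i).2.1 ∉ C)
    (hdisj : Pairwise fun i j => List.Disjoint (P i).2.2.edges (P j).2.2.edges) :
    Fintype.card ι ≤ (G.cut C).card := by
  choose f hf_mem hf_cut using fun i => (P i).2.2.exists_mem_edges_mem_cut (hstart i) (hend i)
  have hf_inj : Function.Injective f := fun i j hij => by
    by_contra hne
    exact hdisj hne (hf_mem i) (hij ▸ hf_mem j)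
  exact Finset.card_le_card_of_injOn (s := Finset.univ) f (fun i _ => hf_cut i) hf_inj.injOn

namespace ImmersionData

variable {H : Multigraph} (β : ImmersionData H G)

lemma exists_path_of_mem_cut {A : Finset H.V} {e : H.E} (he : e ∈ H.cut A) :
    ∃ t : Σ u v : G.V, G.Walk u v,
      t.1 ∈ A.image β.vmap ∧ t.2.1 ∈ Aᶜ.image β.vmap ∧ t.2.2.IsPath ∧
        t.2.2.edges ⊆ (β.walk e).edges := by
  simp only [cut, Finset.mem_filter, Finset.mem_univ, true_and] at he
  obtain ⟨a, ha, b, hb, hends⟩ := he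
  have hβa := Finset.mem_image_of_mem β.vmap ha
  have hβb := Finset.mem_image_of_mem β.vmap hb
  have hpair : s(β.pstart e, β.pend e) = s(β.vmap a, β.vmap b) := by
    rw [β.ends_eq, hends, Sym2.map_mk]
  rcases Sym2.eq_iff.1 hpair with ⟨hs, ht⟩ | ⟨hs, ht⟩
  · exact ⟨⟨_, _, β.walk e⟩, (hs ▸ hβa : β.pstart e ∈ _), (ht ▸ hβb : β.pend e ∈ _),
      β.isPath e, fun _ => id⟩
  · refine ⟨⟨_, _, (β.walk e).reverse⟩, (ht ▸ hβa : β.pend e ∈ _), (hs ▸ hβb : β.pstart e ∈ _),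
      (β.isPath e).reverse, fun x hx => ?_⟩
    simpa only [Walk.edges_reverse, List.mem_reverse] using hx

lemma exists_edgeDisjoint_paths_across_cut (A : Finset H.V) :
    ∃ P : Fin (H.cut A).card → Σ u v : G.V, G.Walk u v,
      (∀ i, (P i).1 ∈ A.image β.vmap) ∧ (∀ i, (P i).2.1 ∈ Aᶜ.image β.vmap) ∧
        (∀ i, (P i).2.2.IsPath) ∧
        Pairwise fun i j => List.Disjoint (P i).2.2.edges (P j).2.2.edges := by
  let g : Fin (H.cut A).card ≃ H.cut A := (H.cut A).equivFin.symm
  choose P hstart hend hpath hsub using fun i => β.exists_path_of_mem_cut (g i).2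
  refine ⟨P, hstart, hend, hpath, fun i j hij x hxi hxj => ?_⟩
  have hne : (g i : H.E) ≠ g j := fun h => hij (g.injective (Subtype.ext h))
  exact β.edgeDisj _ _ hne (hsub i hxi) (hsub j hxj)

end ImmersionData

end Multigraph

open Multigraph in
theorem immersion_paths_across_separation_general (H G : Multigraph)
    (β : ImmersionData H G) (A : Finset H.V) (k : ℕ) (hk : (H.cut A).card = k) :
    (∃ P : Fin k → Σ u v : G.V, G.Walk u v,
      (∀ i, (P i).1 ∈ A.image β.vmap) ∧
      (∀ i, (P i).2.1 ∈ Aᶜ.image β.vmap) ∧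
      (∀ i, (P i).2.2.IsPath) ∧
      (∀ i j, i ≠ j → List.Disjoint (P i).2.2.edges (P j).2.2.edges)) ∧
    (∀ C : Finset G.V,
      (∀ a ∈ A, β.vmap a ∈ C) → (∀ b ∈ Aᶜ, β.vmap b ∈ Cᶜ) →
      k ≤ (G.cut C).card) := by
  subst hk
  obtain ⟨P, hstart, hend, hpath, hdisj⟩ := β.exists_edgeDisjoint_paths_across_cut A
  refine ⟨⟨P, hstart, hend, hpath, hdisj⟩, fun C hAC hAC' => ?_⟩
  have hstartC : ∀ i, (P i).1 ∈ C := fun i => Finset.image_subset_iff.2 hAC (hstart i)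
  have hendC : ∀ i, (P i).2.1 ∉ C := fun i =>
    Finset.mem_compl.1 (Finset.image_subset_iff.2 hAC' (hend i))
  simpa only [Fintype.card_fin] using
    card_le_card_cut_of_pairwise_disjoint P hstartC hendC hdisj

open Multigraph in
/-- If `(A, Aᶜ)` is a separation of `H` of order `k` and `β` is an immersion of
`H` in `G`, then `G` contains `k` pairwise edge-disjoint paths from `β(A)` to
`β(Aᶜ)`; in particular, `G` has no separation `(C, Cᶜ)` of order less than `k`
with `β(A) ⊆ C` and `β(Aᶜ) ⊆ Cᶜ`. -/
theorem immersion_paths_across_separation (H G : Multigraph) (hH : H.Connected)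
    (β : ImmersionData H G) (A : Finset H.V) (hA : A.Nonempty)
    (hA' : A ≠ Finset.univ) (k : ℕ) (hk : (H.cut A).card = k) :
    (∃ P : Fin k → Σ u v : G.V, G.Walk u v,
      (∀ i, (P i).1 ∈ A.image β.vmap) ∧
      (∀ i, (P i).2.1 ∈ Aᶜ.image β.vmap) ∧
      (∀ i, (P i).2.2.IsPath) ∧
      (∀ i j, i ≠ j → List.Disjoint (P i).2.2.edges (P j).2.2.edges)) ∧
    (∀ C : Finset G.V,
      (∀ a ∈ A, β.vmap a ∈ C) → (∀ b ∈ Aᶜ, β.vmap b ∈ Cᶜ) →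
      k ≤ (G.cut C).card) :=
  immersion_paths_across_separation_general H G β A k hk
end

section
/- If G is obtained by a join of H1 and H2 on vertices v1, v2 of degree at most three, and G contains K_{3,3} as an immersion, then H1 or H2 contains K_{3,3} as an immersion. -/
lemma Sym2.isDiag_map_iff' {α β : Type*} {f : α → β} (hf : Function.Injective f)
    (s : Sym2 α) : (s.map f).IsDiag ↔ s.IsDiag := by
  induction s using Sym2.ind with
  | _ x y => simp [Sym2.mk_isDiag_iff, hf.eq_iff]

namespace Multigraph

/-- The join of `H1` and `H2` on vertices `v1` and `v2`: remove `v1` and `v2`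
and match up their incident edges via the bijection `π`, joining the
corresponding other endpoints. -/
def joinGraph (H1 H2 : Multigraph) (v1 : H1.V) (v2 : H2.V)
    (π : {e : H1.E // v1 ∈ H1.ends e} ≃ {e : H2.E // v2 ∈ H2.ends e}) :
    Multigraph where
  V := {x : H1.V // x ≠ v1} ⊕ {x : H2.V // x ≠ v2}
  E := {e : H1.E // v1 ∉ H1.ends e} ⊕ {e : H2.E // v2 ∉ H2.ends e}
       ⊕ {e : H1.E // v1 ∈ H1.ends e}
  ends e := match e with
    | .inl e => ((H1.ends e.1).attachWith (P := fun x => x ≠ v1)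
        (fun _ hx hEq => e.2 (hEq ▸ hx))).map Sum.inl
    | .inr (.inl e) => ((H2.ends e.1).attachWith (P := fun x => x ≠ v2)
        (fun _ hx hEq => e.2 (hEq ▸ hx))).map Sum.inr
    | .inr (.inr e) =>
        s(Sum.inl ⟨Sym2.Mem.other' e.2, fun hEq => H1.noLoop e.1
            (by rw [← Sym2.other_spec' e.2, hEq]; exact Sym2.mk_isDiag_iff.mpr rfl)⟩,
          Sum.inr ⟨Sym2.Mem.other' (π e).2, fun hEq => H2.noLoop (π e).1
            (by rw [← Sym2.other_spec' (π e).2, hEq]; exact Sym2.mk_isDiag_iff.mpr rfl)⟩)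
  noLoop e := match e with
    | .inl e => by
        intro hd
        apply H1.noLoop e.1
        rw [← Sym2.attachWith_map_subtypeVal (s := H1.ends e.1) (P := fun x => x ≠ v1) (fun _ hx hEq => e.2 (hEq ▸ hx))]
        exact (Sym2.isDiag_map_iff' Subtype.val_injective _).mpr
          ((Sym2.isDiag_map_iff' Sum.inl_injective _).mp hd)
    | .inr (.inl e) => by
        intro hd
        apply H2.noLoop e.1
        rw [← Sym2.attachWith_map_subtypeVal (s := H2.ends e.1) (P := fun x => x ≠ v2) (fun _ hx hEq => e.2 (hEq ▸ hx))]
        exact (Sym2.isDiag_map_iff' Subtype.val_injective _).mpr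
          ((Sym2.isDiag_map_iff' Sum.inr_injective _).mp hd)
    | .inr (.inr e) => by simp [Sym2.mk_isDiag_iff]

end Multigraph

/-!
Colour each vertex of `K_{3,3}` by the side of the join (`H1` or `H2`) on which its image lies.
A path between branch vertices of different colours uses one of the `deg v1 ≤ 3` edges
between the two sides, and the paths are edge-disjoint, so at most three edges of `K_{3,3}`
are bichromatic. Since every cut of `K_{3,3}` with at least two vertices on each side has at
least four edges, one colour class has at most one vertex. Contracting the side of that colour
to a single vertex turns `G` into the other `Hi`, keeps the branch vertices distinct and sends
the paths to edge-disjoint walks, which can then be shortened to paths.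
-/

lemma Sym2.isDiag_map_const {α β : Type*} (z : Sym2 α) (b : β) : (z.map fun _ => b).IsDiag := by
  induction z using Sym2.ind with
  | _ x y => exact Sym2.mk_isDiag_iff.mpr rfl

namespace Multigraph

variable {G G' H : Multigraph}

namespace Walk

lemma exists_suffix : ∀ {v w : G.V} (p : G.Walk v w) {u : G.V}, u ∈ p.support →
    ∃ q : G.Walk u w, q.support <:+ p.support ∧ q.edges ⊆ p.edges
  | _, _, .nil _, _, hu => by
      obtain rfl := List.mem_singleton.mp hu
      exact ⟨.nil _, List.suffix_refl _, List.Subset.refl _⟩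
  | _, _, .cons e h p, _, hu => by
      rcases List.mem_cons.mp hu with rfl | hu
      · exact ⟨.cons e h p, List.suffix_refl _, List.Subset.refl _⟩
      · obtain ⟨q, hqs, hqe⟩ := p.exists_suffix hu
        exact ⟨q, hqs.trans (List.suffix_cons _ _),
          List.Subset.trans hqe (List.subset_cons_self _ _)⟩

lemma exists_isPath : ∀ {u v : G.V} (p : G.Walk u v),
    ∃ q : G.Walk u v, q.IsPath ∧ q.edges ⊆ p.edges
  | _, _, .nil v => ⟨.nil v, List.nodup_singleton v, List.Subset.refl _⟩
  | u, _, .cons e h p => by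
      obtain ⟨q, hq, hqe⟩ := p.exists_isPath
      by_cases hu : u ∈ q.support
      · obtain ⟨r, hrs, hre⟩ := q.exists_suffix hu
        exact ⟨r, hrs.sublist.nodup hq,
          List.Subset.trans hre (List.Subset.trans hqe (List.subset_cons_self _ _))⟩
      · exact ⟨.cons e h q, List.nodup_cons.mpr ⟨hu, hq⟩, List.cons_subset_cons _ hqe⟩

lemma exists_mem_edges_not_isDiag_map {β : Type*} (s : G.V → β) :
    ∀ {u v : G.V} (p : G.Walk u v), s u ≠ s v → ∃ b ∈ p.edges, ¬((G.ends b).map s).IsDiag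
  | _, _, .nil _, hne => absurd rfl hne
  | u, _, .cons (v := m) e h p, hne => by
      by_cases hm : s u = s m
      · obtain ⟨b, hb, hbd⟩ := p.exists_mem_edges_not_isDiag_map s (hm ▸ hne)
        exact ⟨b, List.mem_cons_of_mem _ hb, hbd⟩
      · exact ⟨e, List.mem_cons_self, by rwa [h, Sym2.map_mk, Sym2.mk_isDiag_iff]⟩

end Walk

/-- `toE e = none` means that the edge `e` is contracted. -/
structure WeakHom (G G' : Multigraph) where
  toV : G.V → G'.V
  toE : G.E → Option G'.E
  isDiag_of_toE_eq_none : ∀ e, toE e = none → ((G.ends e).map toV).IsDiag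
  ends_of_toE_eq_some : ∀ e a, toE e = some a → G'.ends a = (G.ends e).map toV
  eq_of_toE_eq_some : ∀ e e' a, toE e = some a → toE e' = some a → e = e'

lemma Walk.exists_map (f : WeakHom G G') : ∀ {u v : G.V} (p : G.Walk u v),
    ∃ q : G'.Walk (f.toV u) (f.toV v), ∀ a ∈ q.edges, ∃ b ∈ p.edges, f.toE b = some a
  | _, _, .nil _ => ⟨.nil _, fun _ ha => absurd ha List.not_mem_nil⟩
  | u, _, .cons (v := m) e h p => by
      obtain ⟨q, hq⟩ := p.exists_map f
      have hq' : ∀ a ∈ q.edges, ∃ b ∈ (Walk.cons e h p).edges, f.toE b = some a :=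
        fun a ha => let ⟨b, hb, hba⟩ := hq a ha; ⟨b, List.mem_cons_of_mem _ hb, hba⟩
      cases he : f.toE e with
      | none =>
          have hum : f.toV u = f.toV m := by
            simpa [h] using f.isDiag_of_toE_eq_none e he
          exact hum ▸ ⟨q, hq'⟩
      | some a =>
          refine ⟨.cons a (by rw [f.ends_of_toE_eq_some e a he, h, Sym2.map_mk]) q, ?_⟩
          rintro a' (_ | ⟨_, ha'⟩)
          · exact ⟨e, List.mem_cons_self, he⟩
          · exact hq' a' ha'

lemma ImmersionData.immerses_of_weakHom (D : ImmersionData H G) (f : WeakHom G G')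
    (hf : Function.Injective (f.toV ∘ D.vmap)) : Immerses H G' := by
  have hpath : ∀ e, ∃ q : G'.Walk (f.toV (D.pstart e)) (f.toV (D.pend e)),
      q.IsPath ∧ ∀ a ∈ q.edges, ∃ b ∈ (D.walk e).edges, f.toE b = some a := by
    intro e
    obtain ⟨q, hq⟩ := (D.walk e).exists_map f
    obtain ⟨r, hr, hre⟩ := q.exists_isPath
    exact ⟨r, hr, fun a ha => hq a (hre ha)⟩
  choose q hq hqe using hpath
  refine ⟨⟨f.toV ∘ D.vmap, hf, f.toV ∘ D.pstart, f.toV ∘ D.pend, q,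
    fun e => ?_, hq, ?_⟩⟩
  · rw [← Sym2.map_map, ← D.ends_eq e, Sym2.map_mk]
    rfl
  · intro e e' hne a ha ha'
    obtain ⟨b, hb, hba⟩ := hqe e a ha
    obtain ⟨b', hb', hba'⟩ := hqe e' a ha'
    exact D.edgeDisj e e' hne hb (f.eq_of_toE_eq_some b b' a hba hba' ▸ hb')

namespace joinGraph

variable {H1 H2 : Multigraph} {v1 : H1.V} {v2 : H2.V}
  {π : {e : H1.E // v1 ∈ H1.ends e} ≃ {e : H2.E // v2 ∈ H2.ends e}}

lemma map_ends_inl {β : Type*} (f : {e : H1.E // v1 ∉ H1.ends e})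
    (g : (joinGraph H1 H2 v1 v2 π).V → β) (k : H1.V → β) (hgk : ∀ x, g (.inl x) = k x.1) :
    ((joinGraph H1 H2 v1 v2 π).ends (.inl f)).map g = (H1.ends f.1).map k := by
  conv_rhs => rw [← Sym2.attachWith_map_subtypeVal (s := H1.ends f.1) (P := (· ≠ v1))
    fun _ hx hEq => f.2 (hEq ▸ hx)]
  exact (Sym2.map_map _).trans
    ((congrArg (Sym2.map · _) (funext hgk)).trans (Sym2.map_map _).symm)

lemma map_ends_inr_inl {β : Type*} (f : {e : H2.E // v2 ∉ H2.ends e})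
    (g : (joinGraph H1 H2 v1 v2 π).V → β) (k : H2.V → β) (hgk : ∀ y, g (.inr y) = k y.1) :
    ((joinGraph H1 H2 v1 v2 π).ends (.inr (.inl f))).map g = (H2.ends f.1).map k := by
  conv_rhs => rw [← Sym2.attachWith_map_subtypeVal (s := H2.ends f.1) (P := (· ≠ v2))
    fun _ hx hEq => f.2 (hEq ▸ hx)]
  exact (Sym2.map_map _).trans
    ((congrArg (Sym2.map · _) (funext hgk)).trans (Sym2.map_map _).symm)

lemma exists_ends_inr_inr (f : {e : H1.E // v1 ∈ H1.ends e}) :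
    ∃ (x : {x // x ≠ v1}) (y : {y // y ≠ v2}),
      (joinGraph H1 H2 v1 v2 π).ends (.inr (.inr f)) = s(.inl x, .inr y) ∧
      H1.ends f.1 = s(v1, x.1) ∧ H2.ends (π f).1 = s(v2, y.1) :=
  ⟨_, _, rfl, (Sym2.other_spec' f.2).symm, (Sym2.other_spec' (π f).2).symm⟩

lemma exists_eq_inr_inr_of_not_isDiag {b : (joinGraph H1 H2 v1 v2 π).E}
    (hb : ¬(((joinGraph H1 H2 v1 v2 π).ends b).map Sum.isLeft).IsDiag) :
    ∃ f, b = .inr (.inr f) := by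
  rcases b with f | f | f
  · erw [map_ends_inl f _ (fun _ => true) fun _ => rfl] at hb
    exact absurd (Sym2.isDiag_map_const _ _) hb
  · erw [map_ends_inr_inl f _ (fun _ => false) fun _ => rfl] at hb
    exact absurd (Sym2.isDiag_map_const _ _) hb
  · exact ⟨f, rfl⟩

lemma card_crossing_le_deg (D : ImmersionData H (joinGraph H1 H2 v1 v2 π)) :
    (Finset.univ.filter fun e => ¬((H.ends e).map fun w => (D.vmap w).isLeft).IsDiag).card
      ≤ H1.deg v1 := by
  set S := Finset.univ.filter fun e => ¬((H.ends e).map fun w => (D.vmap w).isLeft).IsDiag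
  have hcross : ∀ e ∈ S,
      ∃ f, (.inr (.inr f) : (joinGraph H1 H2 v1 v2 π).E) ∈ (D.walk e).edges := by
    intro e he
    have hne : (D.pstart e).isLeft ≠ (D.pend e).isLeft := by
      have hmap : ((H.ends e).map fun w => (D.vmap w).isLeft)
          = s((D.pstart e).isLeft, (D.pend e).isLeft) :=
        (Sym2.map_map _).symm.trans (congrArg (Sym2.map Sum.isLeft) (D.ends_eq e)).symm
      simpa [hmap] using (Finset.mem_filter.mp he).2
    obtain ⟨b, hb, hbd⟩ := (D.walk e).exists_mem_edges_not_isDiag_map Sum.isLeft hne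
    obtain ⟨f, rfl⟩ := exists_eq_inr_inr_of_not_isDiag hbd
    exact ⟨f, hb⟩
  choose c hc using fun e : S => hcross e e.2
  have hc_inj : Function.Injective c := fun e e' h =>
    Subtype.ext (by_contra fun hne => D.edgeDisj e e' hne (hc e) (h ▸ hc e'))
  calc S.card = Fintype.card S := (Fintype.card_coe S).symm
    _ ≤ Fintype.card {f : H1.E // v1 ∈ H1.ends f} := Fintype.card_le_of_injective c hc_inj
    _ = H1.deg v1 := Fintype.card_subtype _

def projLeft : WeakHom (joinGraph H1 H2 v1 v2 π) H1 where
  toV := Sum.elim Subtype.val fun _ => v1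
  toE := Sum.elim (fun f => some f.1) (Sum.elim (fun _ => none) fun f => some f.1)
  isDiag_of_toE_eq_none
    | .inr (.inl f), _ => by
        erw [map_ends_inr_inl f _ (fun _ => v1) fun _ => rfl]
        exact Sym2.isDiag_map_const _ _
  ends_of_toE_eq_some
    | .inl f, _, rfl => by
        erw [map_ends_inl f _ id fun _ => rfl, Sym2.map_id, id]
    | .inr (.inr f), _, rfl => by
        obtain ⟨x, y, hJ, h1, -⟩ := exists_ends_inr_inr (π := π) f
        erw [hJ, h1, Sym2.map_mk]
        exact Sym2.eq_swap
  eq_of_toE_eq_some := by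
    rintro (f | f | f) (g | g | g) a h h' <;>
      simp only [Sum.elim_inl, Sum.elim_inr, Option.some.injEq, reduceCtorEq] at h h' <;> subst h
    · exact congrArg _ (Subtype.ext h'.symm)
    · exact absurd (h' ▸ g.2) f.2
    · exact absurd (h' ▸ f.2) g.2
    · exact congrArg (Sum.inr ∘ Sum.inr) (Subtype.ext h'.symm)

def projRight : WeakHom (joinGraph H1 H2 v1 v2 π) H2 where
  toV := Sum.elim (fun _ => v2) Subtype.val
  toE := Sum.elim (fun _ => none) (Sum.elim (fun f => some f.1) fun f => some (π f).1)
  isDiag_of_toE_eq_none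
    | .inl f, _ => by
        erw [map_ends_inl f _ (fun _ => v2) fun _ => rfl]
        exact Sym2.isDiag_map_const _ _
  ends_of_toE_eq_some
    | .inr (.inl f), _, rfl => by
        erw [map_ends_inr_inl f _ id fun _ => rfl, Sym2.map_id, id]
    | .inr (.inr f), _, rfl => by
        obtain ⟨x, y, hJ, -, h2⟩ := exists_ends_inr_inr (π := π) f
        erw [hJ, h2, Sym2.map_mk]
        rfl
  eq_of_toE_eq_some := by
    rintro (f | f | f) (g | g | g) a h h' <;>
      simp only [Sum.elim_inl, Sum.elim_inr, Option.some.injEq, reduceCtorEq] at h h' <;> subst h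
    · exact congrArg (Sum.inr ∘ Sum.inl) (Subtype.ext h'.symm)
    · exact absurd (h' ▸ (π g).2) f.2
    · exact absurd (h' ▸ (π f).2) g.2
    · exact congrArg (Sum.inr ∘ Sum.inr) (π.injective (Subtype.ext h'.symm))

lemma injective_projLeft_comp {α : Type*} {g : α → (joinGraph H1 H2 v1 v2 π).V}
    (hg : Function.Injective g)
    (hright : ∀ a a', (g a).isLeft = false → (g a').isLeft = false → a = a') :
    Function.Injective (projLeft.toV ∘ g) := by
  intro a a' h
  rcases ha : g a with x | y <;> rcases ha' : g a' with x' | y' <;>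
    simp only [Function.comp_apply, ha, ha'] at h
  · exact hg (ha.trans ((congrArg Sum.inl (Subtype.ext h)).trans ha'.symm))
  · exact absurd h x.2
  · exact absurd h.symm x'.2
  · exact hright a a' (by rw [ha]; rfl) (by rw [ha']; rfl)

lemma injective_projRight_comp {α : Type*} {g : α → (joinGraph H1 H2 v1 v2 π).V}
    (hg : Function.Injective g)
    (hleft : ∀ a a', (g a).isLeft = true → (g a').isLeft = true → a = a') :
    Function.Injective (projRight.toV ∘ g) := by
  intro a a' h
  rcases ha : g a with x | y <;> rcases ha' : g a' with x' | y' <;>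
    simp only [Function.comp_apply, ha, ha'] at h
  · exact hleft a a' (by rw [ha]; rfl) (by rw [ha']; rfl)
  · exact absurd h.symm y'.2
  · exact absurd h y.2
  · exact hg (ha.trans ((congrArg Sum.inr (Subtype.ext h)).trans ha'.symm))

end joinGraph

/-- Every cut of `K_{3,3}` with at least two vertices on each side has at least four edges. -/
lemma K33.exists_subsingleton_colorClass : ∀ c : K33.V → Bool,
    (Finset.univ.filter fun e : K33.E => ¬((K33.ends e).map c).IsDiag).card ≤ 3 →
    ∃ b, ∀ w w', c w = b → c w' = b → w = w' := by
  decide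

end Multigraph

open Multigraph in
theorem k33_of_joinGraph_k33_general (H1 H2 : Multigraph) (v1 : H1.V) (v2 : H2.V)
    (π : {e : H1.E // v1 ∈ H1.ends e} ≃ {e : H2.E // v2 ∈ H2.ends e})
    (hd1 : H1.deg v1 ≤ 3)
    (himm : Immerses K33 (joinGraph H1 H2 v1 v2 π)) :
    Immerses K33 H1 ∨ Immerses K33 H2 := by
  obtain ⟨D⟩ := himm
  obtain ⟨b, hb⟩ := K33.exists_subsingleton_colorClass (fun w => (D.vmap w).isLeft)
    ((joinGraph.card_crossing_le_deg D).trans hd1)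
  cases b
  · exact .inl (D.immerses_of_weakHom _ (joinGraph.injective_projLeft_comp D.inj hb))
  · exact .inr (D.immerses_of_weakHom _ (joinGraph.injective_projRight_comp D.inj hb))

open Multigraph in
/-- If `G` is a join of `H1` and `H2` on vertices `v1`, `v2` of degree at most
three (each `Hi` having at least three vertices), and `G` contains `K_{3,3}`
as an immersion, then `H1` or `H2` contains `K_{3,3}` as an immersion. -/
theorem k33_of_joinGraph_k33 (H1 H2 : Multigraph) (v1 : H1.V) (v2 : H2.V)
    (π : {e : H1.E // v1 ∈ H1.ends e} ≃ {e : H2.E // v2 ∈ H2.ends e})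
    (hc1 : 3 ≤ Fintype.card H1.V) (hc2 : 3 ≤ Fintype.card H2.V)
    (hd1 : H1.deg v1 ≤ 3) (hd2 : H2.deg v2 ≤ 3)
    (himm : Immerses K33 (joinGraph H1 H2 v1 v2 π)) :
    Immerses K33 H1 ∨ Immerses K33 H2 :=
  k33_of_joinGraph_k33_general H1 H2 v1 v2 π hd1 himm
end
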